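/- Let G = (V, E) be a finite acyclic digraph and let (V1, E1), (V2, E2) be a separation of G along a pair {u, v} of distinct vertices. If u dominates v in H2 = (V2, E2), then the digraph (V1, E1 ∪ {(u, v)}) is acyclic. -/

import Mathlib

/-- `x` dominates `y` in the digraph with edge set `E`: there is a directed
path with at least one edge from `x` to `y`. -/
def Dominates {α : Type*} (E : Finset (α × α)) (x y : α) : Prop :=
  Relation.TransGen (fun a b => (a, b) ∈ E) x y

/-- A separation of the finite digraph `(V, E)` along the pair `{u, v}` of
distinct vertices into `H1 = (V1, E1)` and `H2 = (V2, E2)`. -/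
structure Separation {α : Type*} [DecidableEq α] (V : Finset α) (E : Finset (α × α))
    (u v : α) (V1 V2 : Finset α) (E1 E2 : Finset (α × α)) : Prop where
  ne : u ≠ v
  vUnion : V1 ∪ V2 = V
  vInter : V1 ∩ V2 = {u, v}
  eDisjoint : Disjoint E1 E2
  eUnion : E1 ∪ E2 = E
  mem1 : ∀ e ∈ E1, e.1 ∈ V1 ∧ e.2 ∈ V1
  mem2 : ∀ e ∈ E2, e.1 ∈ V2 ∧ e.2 ∈ V2

namespace Dominates

variable {α : Type*} {E F : Finset (α × α)} {x y : α}

theorem mono (hEF : E ⊆ F) (h : Dominates E x y) : Dominates F x y :=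
  Relation.TransGen.mono (fun _ _ hab => hEF hab) _ _ h

theorem of_forall_mem_dominates (hF : ∀ a b, (a, b) ∈ F → Dominates E a b)
    (h : Dominates F x y) : Dominates E x y :=
  Relation.TransGen.closed hF _ _ h

end Dominates

theorem acyclic_of_forall_mem_dominates {α : Type*} {E F : Finset (α × α)}
    (hacyc : ∀ x : α, ¬ Dominates E x x) (hF : ∀ a b, (a, b) ∈ F → Dominates E a b) :
    ∀ x : α, ¬ Dominates F x x :=
  fun x h => hacyc x (h.of_forall_mem_dominates hF)

/-- If `G` is acyclic and `u` dominates `v` in `H2`, then `H1` augmented by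
the marker edge `(u, v)` is acyclic. -/
theorem stmt13 {α : Type*} [DecidableEq α] (V V1 V2 : Finset α)
    (E E1 E2 : Finset (α × α)) (u v : α)
    (hsep : Separation V E u v V1 V2 E1 E2)
    (hacyc : ∀ x : α, ¬ Dominates E x x)
    (hdom : Dominates E2 u v) :
    ∀ x : α, ¬ Dominates (insert (u, v) E1) x x := by
  refine acyclic_of_forall_mem_dominates hacyc fun a b hab => ?_
  rw [← hsep.eUnion]
  rcases Finset.mem_insert.mp hab with hmarker | hE1
  · obtain ⟨rfl, rfl⟩ := Prod.ext_iff.mp hmarker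
    exact hdom.mono Finset.subset_union_right
  · exact .single (Finset.mem_union_left _ hE1)
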